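/- Universal approximation property of one-dimensional Cauchy kernels: For every compact interval I ⊆ ℝ, every continuous function g : I → ℝ, and every ε > 0, there exist a natural number m ≥ 1, complex numbers ξ_1, …, ξ_m ∈ ℂ each with strictly positive imaginary part, and complex parameters λ_1, …, λ_m ∈ ℂ such that sup_{x ∈ I} |g(x) − Re(∑_{k=1}^m λ_k / (ξ_k − x))| < ε. Equivalently, the family of functions { x ↦ Re(λ / (ξ − x)) : λ ∈ ℂ, ξ ∈ ℂ, Im ξ > 0 } has the universal approximation property on ℝ. -/

import Mathlib

/-! The uniform closure `L` of the real parts of Cauchy-kernel sums is a closed subspace of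
`C(s, ℝ)`. It contains the constants, because `i t / (i t - x) → 1` uniformly on bounded sets as
`t → ∞`, and it is stable under multiplication by `x`, because
`x · λ / (ξ - x) = λ ξ / (ξ - x) - λ` turns a kernel sum into a kernel sum minus a constant.
Hence `L` contains every polynomial, and the Weierstrass theorem gives `L = C(s, ℝ)`. -/

open Polynomial

lemma Complex.sub_ofReal_ne_zero_of_im_pos {ξ : ℂ} (hξ : 0 < ξ.im) (x : ℝ) : ξ - x ≠ 0 :=
  fun h => hξ.ne' (by simpa using congrArg Complex.im h)

lemma Complex.norm_div_sub_ofReal_sub_one_le {ξ : ℂ} (hξ : 0 < ξ.im) (x : ℝ) :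
    ‖ξ / (ξ - x) - 1‖ ≤ |x| / ξ.im := by
  have hne := Complex.sub_ofReal_ne_zero_of_im_pos hξ x
  have hid : ξ / (ξ - x) - 1 = x / (ξ - x) := by field_simp; ring
  rw [hid, norm_div, Complex.norm_real, Real.norm_eq_abs]
  refine div_le_div_of_nonneg_left (abs_nonneg x) hξ ?_
  calc ξ.im = (ξ - x).im := by simp
    _ ≤ ‖ξ - x‖ := Complex.im_le_norm _

variable {s : Set ℝ}

noncomputable def cauchyKernel (ξ lam : ℂ) (hξ : 0 < ξ.im) : C(s, ℝ) where
  toFun x := (lam / (ξ - (x : ℝ))).re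
  continuous_toFun := Complex.continuous_re.comp <| continuous_const.div
    (continuous_const.sub (Complex.continuous_ofReal.comp continuous_subtype_val))
    fun x => Complex.sub_ofReal_ne_zero_of_im_pos hξ x

noncomputable def cauchyKernelSums (s : Set ℝ) : Submodule ℝ C(s, ℝ) where
  carrier := {f | ∃ (m : ℕ) (ξ lam : Fin m → ℂ), (∀ k, 0 < (ξ k).im) ∧
    ∀ x : s, f x = (∑ k, lam k / (ξ k - (x : ℝ))).re}
  zero_mem' := ⟨0, Fin.elim0, Fin.elim0, Fin.rec0, by simp⟩
  add_mem' := by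
    rintro f g ⟨m, ξ, lam, hξ, hf⟩ ⟨n, η, mu, hη, hg⟩
    refine ⟨m + n, Fin.append ξ η, Fin.append lam mu, Fin.addCases (by simpa) (by simpa),
      fun x => ?_⟩
    simp [Fin.sum_univ_add, hf x, hg x]
  smul_mem' := by
    rintro c f ⟨m, ξ, lam, hξ, hf⟩
    refine ⟨m, ξ, fun k => c * lam k, hξ, fun x => ?_⟩
    simp [hf x, mul_div_assoc, ← Finset.mul_sum]

lemma cauchyKernel_mem_cauchyKernelSums (ξ lam : ℂ) (hξ : 0 < ξ.im) :
    cauchyKernel ξ lam hξ ∈ cauchyKernelSums s :=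
  ⟨1, fun _ => ξ, fun _ => lam, fun _ => hξ, fun x => by simp [cauchyKernel]⟩

lemma exists_X_mul_add_const_mem_cauchyKernelSums {f : C(s, ℝ)}
    (hf : f ∈ cauchyKernelSums s) :
    ∃ c : ℝ,
      toContinuousMapOnAlgHom s X * f + algebraMap ℝ C(s, ℝ) c ∈ cauchyKernelSums s := by
  obtain ⟨m, ξ, lam, hξ, hf⟩ := hf
  refine ⟨(∑ k, lam k).re, m, ξ, fun k => lam k * ξ k, hξ, fun x => ?_⟩
  have hterm (k : Fin m) :
      (x : ℂ) * (lam k / (ξ k - x)) + lam k = lam k * ξ k / (ξ k - x) := by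
    field_simp [Complex.sub_ofReal_ne_zero_of_im_pos (hξ k) x]
    ring
  simp [hf x, ← hterm, Finset.sum_add_distrib, ← Finset.mul_sum]

lemma one_mem_topologicalClosure_cauchyKernelSums [CompactSpace s] :
    (1 : C(s, ℝ)) ∈ (cauchyKernelSums s).topologicalClosure := by
  set R := ‖X.toContinuousMapOn s‖
  refine Metric.mem_closure_iff.2 fun ε hε => ?_
  set t := (R + 1) / ε with ht_def
  have ht : 0 < t := by positivity
  set ξ := Complex.I * t
  have hξ : 0 < ξ.im := by simpa [ξ]
  refine ⟨cauchyKernel ξ ξ hξ, cauchyKernel_mem_cauchyKernelSums ξ ξ hξ, ?_⟩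
  have hdist : dist 1 (cauchyKernel (s := s) ξ ξ hξ) ≤ R / t := by
    refine (ContinuousMap.dist_le (by positivity)).2 fun x => ?_
    have hx : |(x : ℝ)| ≤ R := by
      simpa using ContinuousMap.norm_coe_le_norm (X.toContinuousMapOn s) x
    calc dist (1 : ℝ) (cauchyKernel (s := s) ξ ξ hξ x)
        = |(ξ / (ξ - (x : ℝ)) - 1).re| := by
          simp [cauchyKernel, Real.dist_eq, abs_sub_comm]
      _ ≤ |(x : ℝ)| / t := by
          simpa [ξ] using (Complex.abs_re_le_norm _).trans
            (Complex.norm_div_sub_ofReal_sub_one_le hξ x)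
      _ ≤ R / t := by gcongr
  refine hdist.trans_lt ?_
  rw [div_lt_iff₀ ht, ht_def, mul_div_cancel₀ _ hε.ne']
  linarith

lemma X_mul_mem_topologicalClosure_cauchyKernelSums [CompactSpace s] {f : C(s, ℝ)}
    (hf : f ∈ (cauchyKernelSums s).topologicalClosure) :
    toContinuousMapOnAlgHom s X * f ∈ (cauchyKernelSums s).topologicalClosure := by
  set L := (cauchyKernelSums s).topologicalClosure
  have hle :
      cauchyKernelSums s ≤ L.comap (LinearMap.mulLeft ℝ (toContinuousMapOnAlgHom s X)) := by
    intro g hg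
    obtain ⟨c, hc⟩ := exists_X_mul_add_const_mem_cauchyKernelSums hg
    have hsub := L.sub_mem ((cauchyKernelSums s).le_topologicalClosure hc)
      (L.smul_mem c one_mem_topologicalClosure_cauchyKernelSums)
    simpa [Algebra.algebraMap_eq_smul_one] using hsub
  exact (cauchyKernelSums s).topologicalClosure_minimal hle
    ((cauchyKernelSums s).isClosed_topologicalClosure.preimage (continuous_const_mul _)) hf

lemma toContinuousMapOnAlgHom_mem_topologicalClosure_cauchyKernelSums [CompactSpace s]
    (p : ℝ[X]) : toContinuousMapOnAlgHom s p ∈ (cauchyKernelSums s).topologicalClosure := by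
  induction p using Polynomial.induction_on with
  | C a =>
    rw [← Polynomial.algebraMap_eq, AlgHom.commutes, Algebra.algebraMap_eq_smul_one]
    exact Submodule.smul_mem _ a one_mem_topologicalClosure_cauchyKernelSums
  | add p q hp hq => rw [map_add]; exact Submodule.add_mem _ hp hq
  | monomial n a h =>
    rw [pow_succ', mul_left_comm, map_mul]
    exact X_mul_mem_topologicalClosure_cauchyKernelSums h

theorem cauchyKernelSums_topologicalClosure_eq_top [CompactSpace s] :
    (cauchyKernelSums s).topologicalClosure = ⊤ := by
  have hpoly := ContinuousMap.subalgebra_topologicalClosure_eq_top_of_separatesPoints _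
    (polynomialFunctions_separatesPoints s)
  refine eq_top_iff.2 fun f _ => ?_
  have hf : f ∈ (polynomialFunctions s).topologicalClosure := by rw [hpoly]; trivial
  refine closure_minimal ?_ (cauchyKernelSums s).isClosed_topologicalClosure hf
  rintro _ ⟨p, -, rfl⟩
  exact toContinuousMapOnAlgHom_mem_topologicalClosure_cauchyKernelSums p

/-- **Universal approximation property of one-dimensional Cauchy kernels.**
Every continuous function on a compact interval `[a, b] ⊆ ℝ` can be uniformly
approximated by the real part of finite combinations of Cauchy kernels
`x ↦ λ/(ξ − x)` with poles `ξ` in the upper half-plane. -/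
theorem cauchy_kernel_universal_approximation (a b : ℝ)
    (g : ℝ → ℝ) (hg : ContinuousOn g (Set.Icc a b)) :
    ∀ ε > 0, ∃ m : ℕ, 1 ≤ m ∧
      ∃ (ξ : Fin m → ℂ) (lam : Fin m → ℂ),
        (∀ k, 0 < (ξ k).im) ∧
        ∀ x ∈ Set.Icc a b, |g x - (∑ k, lam k / (ξ k - (x : ℂ))).re| < ε := by
  intro ε hε
  let g' : C(Set.Icc a b, ℝ) := ⟨fun x => g x, hg.domRestrict⟩
  have hg' : g' ∈ closure (cauchyKernelSums (Set.Icc a b) : Set C(Set.Icc a b, ℝ)) := by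
    rw [← Submodule.topologicalClosure_coe, cauchyKernelSums_topologicalClosure_eq_top]
    trivial
  obtain ⟨f, ⟨m, ξ, lam, hξ, hf⟩, hdist⟩ := Metric.mem_closure_iff.1 hg' ε hε
  -- a kernel with coefficient `0` makes the sum nonempty
  refine ⟨m + 1, Nat.le_add_left 1 m, Fin.cons Complex.I ξ, Fin.cons 0 lam,
    Fin.cases (by simp) hξ, fun x hx => ?_⟩
  have hx' : |g x - f ⟨x, hx⟩| < ε :=
    (ContinuousMap.dist_apply_le_dist ⟨x, hx⟩).trans_lt hdist
  simpa [Fin.sum_univ_succ, hf] using hx'
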